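/- arXiv:2301.13643 — 3 statements merged into one kernel-verified Lean document; each statement's English description precedes it below -/
import Mathlib

section
/- Let \mu_1, \mu_2 be real numbers with -1/2 < \mu_1 < \mu_2, and let f(x) = \sum_{n=0}^{\infty} a_n x^n be a power series with complex coefficients converging for all |x| < 1. Then for every real x with |x| < 1, \sum_{n=0}^{\infty} a_n (\gamma_{\mu_1}(n)/\gamma_{\mu_2}(n)) x^n = (1/\beta(\mu_1+1/2, \mu_2-\mu_1)) \int_{-1}^{1} f(xt) |t|^{2\mu_1} (1-t)^{\mu_2-\mu_1-1} (1+t)^{\mu_2-\mu_1} \, dt, and the series on the left converges. -/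
open Finset

/-- The Dunkl generalized factorial: `γ_μ(2p+ε) = 2^(2p+ε) p! (μ+1/2)_{p+ε}`
for `ε ∈ {0,1}`. -/
noncomputable def dunklGamma (μ : ℝ) (n : ℕ) : ℝ :=
  2 ^ n * (Nat.factorial (n / 2) : ℝ) *
    ∏ i ∈ Finset.range (n / 2 + n % 2), (μ + 1 / 2 + i)

/-- Euler's Beta function `β(x,y) = Γ(x)Γ(y)/Γ(x+y)`. -/
noncomputable def realBeta (x y : ℝ) : ℝ :=
  Real.Gamma x * Real.Gamma y / Real.Gamma (x + y)

/-!
Expanding `f(xt)` and integrating termwise (dominated by `∑ ‖aₙ‖ |x|ⁿ w`), it suffices to compute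
the moments of the weight `w(t) = |t|^{2μ₁} (1-t)^{κ-1} (1+t)^κ`, `κ = μ₂ - μ₁`. For `0 ≤ s ≤ 1`
one has `w(±s) = s^{2μ₁} (1-s²)^{κ-1} (1 ± s)`, so folding `(-1,1)` onto `(0,1)` kills the terms of
the wrong parity: `∫ tⁿ w = 2 ∫₀¹ s^{2m+2μ₁} (1-s²)^{κ-1} ds` with `m = ⌈n/2⌉`, and the substitution
`u = s²` turns this into `β(μ₁ + 1/2 + m, κ)`. Divided by `β(μ₁ + 1/2, κ)` it becomes
`(μ₁ + 1/2)_m / (μ₂ + 1/2)_m = γ_{μ₁}(n) / γ_{μ₂}(n)`.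
-/

open MeasureTheory Set Filter
open scoped Interval

section Beta

variable {a b : ℝ}

lemma realBeta_pos (ha : 0 < a) (hb : 0 < b) : 0 < realBeta a b := by
  have := Real.Gamma_pos_of_pos ha
  have := Real.Gamma_pos_of_pos hb
  have := Real.Gamma_pos_of_pos (add_pos ha hb)
  unfold realBeta
  positivity

lemma ofReal_rpow_mul_one_sub_rpow {u : ℝ} (hu : u ∈ Icc (0 : ℝ) 1) :
    ((u ^ (a - 1) * (1 - u) ^ (b - 1) : ℝ) : ℂ) =
      (u : ℂ) ^ ((a : ℂ) - 1) * (1 - (u : ℂ)) ^ ((b : ℂ) - 1) := by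
  rw [Complex.ofReal_mul, Complex.ofReal_cpow hu.1, Complex.ofReal_cpow (sub_nonneg.2 hu.2)]
  push_cast
  rfl

lemma integrableOn_rpow_mul_one_sub_rpow (ha : 0 < a) (hb : 0 < b) :
    IntegrableOn (fun u : ℝ => u ^ (a - 1) * (1 - u) ^ (b - 1)) (Ioo 0 1) := by
  have h := ((Complex.betaIntegral_convergent (u := a) (v := b) (by simpa) (by simpa)).1.mono_set
    Ioo_subset_Ioc_self).re
  refine IntegrableOn.congr_fun h (fun u hu => ?_) measurableSet_Ioo
  rw [← ofReal_rpow_mul_one_sub_rpow (Ioo_subset_Icc_self hu)]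
  exact Complex.ofReal_re _

lemma integral_rpow_mul_one_sub_rpow (ha : 0 < a) (hb : 0 < b) :
    ∫ u in Ioo (0 : ℝ) 1, u ^ (a - 1) * (1 - u) ^ (b - 1) = realBeta a b := by
  have hbeta : Complex.betaIntegral a b =
      ((∫ u in Ioo (0 : ℝ) 1, u ^ (a - 1) * (1 - u) ^ (b - 1) : ℝ) : ℂ) := by
    rw [Complex.betaIntegral, intervalIntegral.integral_of_le zero_le_one,
      integral_Ioc_eq_integral_Ioo]
    refine (setIntegral_congr_fun measurableSet_Ioo fun u hu => ?_).trans integral_ofReal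
    exact (ofReal_rpow_mul_one_sub_rpow (Ioo_subset_Icc_self hu)).symm
  have key := Complex.Gamma_mul_Gamma_eq_betaIntegral (s := a) (t := b) (by simpa) (by simpa)
  rw [hbeta, ← Complex.ofReal_add, Complex.Gamma_ofReal, Complex.Gamma_ofReal,
    Complex.Gamma_ofReal] at key
  have hG : Real.Gamma (a + b) ≠ 0 := (Real.Gamma_pos_of_pos (add_pos ha hb)).ne'
  rw [realBeta, eq_div_iff hG, mul_comm]
  exact_mod_cast key.symm

end Beta

lemma prod_range_add_eq_Gamma_div {x : ℝ} (hx : 0 < x) (k : ℕ) :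
    ∏ i ∈ range k, (x + i) = Real.Gamma (x + k) / Real.Gamma x := by
  rw [eq_div_iff (Real.Gamma_pos_of_pos hx).ne']
  induction k with
  | zero => simp
  | succ k ih =>
    rw [prod_range_succ, Nat.cast_succ, ← add_assoc, Real.Gamma_add_one (by positivity), ← ih]
    ring

lemma dunklGamma_div_dunklGamma {μ₁ μ₂ : ℝ} (h₁ : -(1/2) < μ₁) (h₁₂ : μ₁ < μ₂) (n : ℕ) :
    dunklGamma μ₁ n / dunklGamma μ₂ n =
      realBeta (μ₁ + 1/2 + (n / 2 + n % 2 : ℕ)) (μ₂ - μ₁) / realBeta (μ₁ + 1/2) (μ₂ - μ₁) := by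
  have hc₁ : 0 < μ₁ + 1/2 := by linarith
  have hc₂ : 0 < μ₂ + 1/2 := by linarith
  have hκ : 0 < μ₂ - μ₁ := by linarith
  have := Real.Gamma_pos_of_pos hc₁
  have := Real.Gamma_pos_of_pos hc₂
  have := Real.Gamma_pos_of_pos hκ
  have := Real.Gamma_pos_of_pos (add_pos_of_pos_of_nonneg hc₁ (Nat.cast_nonneg (n / 2 + n % 2)))
  have := Real.Gamma_pos_of_pos (add_pos_of_pos_of_nonneg hc₂ (Nat.cast_nonneg (n / 2 + n % 2)))
  rw [dunklGamma, dunklGamma, prod_range_add_eq_Gamma_div hc₁, prod_range_add_eq_Gamma_div hc₂,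
    realBeta, realBeta, show μ₁ + 1/2 + (μ₂ - μ₁) = μ₂ + 1/2 by ring,
    show μ₁ + 1/2 + ((n / 2 + n % 2 : ℕ) : ℝ) + (μ₂ - μ₁) = μ₂ + 1/2 + (n / 2 + n % 2 : ℕ) by ring]
  field_simp

section Substitution

variable {E : Type*} [NormedAddCommGroup E] [NormedSpace ℝ E]

lemma image_sq_Ioo_zero_one : (fun s : ℝ => s ^ 2) '' Set.Ioo 0 1 = Set.Ioo 0 1 := by
  ext u
  constructor
  · rintro ⟨s, ⟨hs₀, hs₁⟩, rfl⟩
    exact ⟨by positivity, by nlinarith⟩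
  · intro hu
    refine ⟨√u, ⟨Real.sqrt_pos.2 hu.1, ?_⟩, Real.sq_sqrt hu.1.le⟩
    simpa using Real.sqrt_lt_sqrt hu.1.le hu.2

lemma integral_Ioo_zero_one_comp_sq (f : ℝ → E) :
    ∫ s in Ioo (0 : ℝ) 1, (2 * s) • f (s ^ 2) = ∫ u in Ioo (0 : ℝ) 1, f u := by
  nth_rewrite 2 [← image_sq_Ioo_zero_one]
  rw [integral_image_eq_integral_abs_deriv_smul measurableSet_Ioo
    (fun s _ => by simpa using (hasDerivAt_pow 2 s).hasDerivWithinAt)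
    (fun s hs t ht _ => by nlinarith [hs.1, ht.1])]
  exact setIntegral_congr_fun measurableSet_Ioo fun s hs => by rw [abs_of_pos (by linarith [hs.1])]

lemma integrableOn_Ioo_zero_one_comp_sq_iff {f : ℝ → E} :
    IntegrableOn (fun s => (2 * s) • f (s ^ 2)) (Ioo 0 1) ↔ IntegrableOn f (Ioo 0 1) := by
  nth_rewrite 2 [← image_sq_Ioo_zero_one]
  rw [integrableOn_image_iff_integrableOn_abs_deriv_smul measurableSet_Ioo
    (fun s _ => by simpa using (hasDerivAt_pow 2 s).hasDerivWithinAt)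
    (fun s hs t ht _ => by nlinarith [hs.1, ht.1])]
  exact integrableOn_congr_fun (fun s hs => by rw [abs_of_pos (by linarith [hs.1])])
    measurableSet_Ioo

lemma intervalIntegral_neg_self_eq_integral_add_comp_neg {g : ℝ → E} {c : ℝ}
    (hg : IntervalIntegrable g volume (-c) c) :
    ∫ t in -c..c, g t = ∫ s in 0..c, (g s + g (-s)) := by
  have h₀ : (0 : ℝ) ∈ Set.uIcc (-c) c := by
    rcases le_total 0 c with h | h <;> simp [Set.uIcc, h]
  have hneg := hg.mono_set (uIcc_subset_uIcc_left h₀)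
  have hpos := hg.mono_set (uIcc_subset_uIcc_right h₀)
  have hneg' : IntervalIntegrable (fun s => g (-s)) volume 0 c := by
    simpa using ((IntervalIntegrable.iff_comp_neg (a := -c) (b := 0)).1 hneg).symm
  rw [← intervalIntegral.integral_add_adjacent_intervals hneg hpos,
    intervalIntegral.integral_add hpos hneg',
    intervalIntegral.integral_comp_neg, neg_zero, add_comm]

end Substitution

noncomputable def dunklWeight (μ κ t : ℝ) : ℝ :=
  |t| ^ (2 * μ) * (1 - t) ^ (κ - 1) * (1 + t) ^ κ

section Weight

variable {μ κ : ℝ}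

lemma dunklWeight_nonneg {t : ℝ} (ht : t ∈ Set.Icc (-1) 1) : 0 ≤ dunklWeight μ κ t := by
  obtain ⟨ht₁, ht₂⟩ := ht
  have := Real.rpow_nonneg (abs_nonneg t) (2 * μ)
  have := Real.rpow_nonneg (by linarith : 0 ≤ 1 - t) (κ - 1)
  have := Real.rpow_nonneg (by linarith : 0 ≤ 1 + t) κ
  unfold dunklWeight
  positivity

lemma measurable_dunklWeight : Measurable (dunklWeight μ κ) := by
  unfold dunklWeight
  fun_prop

lemma rpow_sub_one_mul_rpow {u v : ℝ} (hu : 0 ≤ u) (hv : 0 ≤ v) (hκ : κ ≠ 0) :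
    u ^ (κ - 1) * v ^ κ = (u * v) ^ (κ - 1) * v := by
  rw [Real.mul_rpow hu hv, mul_assoc, ← Real.rpow_add_one' hv (by simpa using hκ), sub_add_cancel]

lemma dunklWeight_of_mem_Icc (hκ : κ ≠ 0) {s : ℝ} (hs : s ∈ Set.Icc 0 1) :
    dunklWeight μ κ s = s ^ (2 * μ) * (1 - s ^ 2) ^ (κ - 1) * (1 + s) := by
  rw [dunklWeight, abs_of_nonneg hs.1, mul_assoc,
    rpow_sub_one_mul_rpow (by linarith [hs.2]) (by linarith [hs.1]) hκ]
  ring_nf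

lemma dunklWeight_neg_of_mem_Icc (hκ : κ ≠ 0) {s : ℝ} (hs : s ∈ Set.Icc 0 1) :
    dunklWeight μ κ (-s) = s ^ (2 * μ) * (1 - s ^ 2) ^ (κ - 1) * (1 - s) := by
  rw [dunklWeight, abs_neg, abs_of_nonneg hs.1, sub_neg_eq_add, ← sub_eq_add_neg, mul_assoc,
    rpow_sub_one_mul_rpow (by linarith [hs.1]) (by linarith [hs.2]) hκ]
  ring_nf

lemma pow_mul_one_add_add_neg_pow_mul_one_sub {R : Type*} [CommRing R] (s : R) (n : ℕ) :
    s ^ n * (1 + s) + (-s) ^ n * (1 - s) = 2 * s ^ (2 * (n / 2 + n % 2)) := by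
  obtain ⟨p, rfl | rfl⟩ := Nat.even_or_odd' n
  · rw [(even_two_mul p).neg_pow, show 2 * p / 2 + 2 * p % 2 = p by omega]
    ring
  · rw [(odd_two_mul_add_one p).neg_pow, show (2 * p + 1) / 2 + (2 * p + 1) % 2 = p + 1 by omega]
    ring

lemma pow_mul_dunklWeight_add_neg (hκ : κ ≠ 0) (n : ℕ) {s : ℝ} (hs : s ∈ Set.Ioo 0 1) :
    s ^ n * dunklWeight μ κ s + (-s) ^ n * dunklWeight μ κ (-s) =
      (2 * s) * ((s ^ 2) ^ (μ + 1/2 + (n / 2 + n % 2 : ℕ) - 1) * (1 - s ^ 2) ^ (κ - 1)) := by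
  set m := n / 2 + n % 2
  have hs₀ : 0 < s := hs.1
  rw [dunklWeight_of_mem_Icc hκ (Ioo_subset_Icc_self hs),
    dunklWeight_neg_of_mem_Icc hκ (Ioo_subset_Icc_self hs)]
  have hfold := pow_mul_one_add_add_neg_pow_mul_one_sub s n
  have hpow : s * (s ^ 2) ^ (μ + 1/2 + m - 1) = s ^ (2 * μ) * s ^ (2 * m) := by
    rw [mul_comm s, ← Real.rpow_natCast s 2, ← Real.rpow_mul hs₀.le, ← Real.rpow_add_one hs₀.ne',
      ← Real.rpow_natCast s (2 * m), ← Real.rpow_add hs₀]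
    push_cast
    ring_nf
  linear_combination (s ^ (2 * μ) * (1 - s ^ 2) ^ (κ - 1)) * hfold -
    2 * (1 - s ^ 2) ^ (κ - 1) * hpow

lemma intervalIntegrable_dunklWeight (hμ : -(1/2) < μ) (hκ : 0 < κ) :
    IntervalIntegrable (dunklWeight μ κ) volume (-1) 1 := by
  have hB : IntegrableOn (fun s : ℝ => (2 * s) • ((s ^ 2) ^ (μ + 1/2 - 1) * (1 - s ^ 2) ^ (κ - 1)))
      (Set.Ioo 0 1) :=
    integrableOn_Ioo_zero_one_comp_sq_iff.2 (integrableOn_rpow_mul_one_sub_rpow (by linarith) hκ)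
  have hle : ∀ s ∈ Set.Ioo (0 : ℝ) 1, ∀ t ∈ ({s, -s} : Set ℝ),
      ‖dunklWeight μ κ t‖ ≤ (2 * s) * ((s ^ 2) ^ (μ + 1/2 - 1) * (1 - s ^ 2) ^ (κ - 1)) := by
    intro s hs t ht
    have hsum := pow_mul_dunklWeight_add_neg (μ := μ) hκ.ne' 0 hs
    simp only [pow_zero, one_mul, Nat.zero_div, Nat.zero_mod, add_zero, Nat.cast_zero] at hsum
    have hws := dunklWeight_nonneg (μ := μ) (κ := κ) (t := s) ⟨by linarith [hs.1], hs.2.le⟩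
    have hwns := dunklWeight_nonneg (μ := μ) (κ := κ) (t := -s)
      ⟨by linarith [hs.2], by linarith [hs.1]⟩
    rcases ht with rfl | rfl <;> rw [Real.norm_of_nonneg (by assumption)] <;> linarith
  have hpos : IntegrableOn (dunklWeight μ κ) (Set.Ioo 0 1) :=
    hB.mono' measurable_dunklWeight.aestronglyMeasurable
      ((ae_restrict_mem measurableSet_Ioo).mono fun s hs => hle s hs s (by simp))
  have hneg : IntegrableOn (fun s => dunklWeight μ κ (-s)) (Set.Ioo 0 1) :=
    hB.mono' (measurable_dunklWeight.comp measurable_neg).aestronglyMeasurable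
      ((ae_restrict_mem measurableSet_Ioo).mono fun s hs => hle s hs (-s) (by simp))
  rw [← intervalIntegrable_iff_integrableOn_Ioo_of_le zero_le_one] at hpos hneg
  refine IntervalIntegrable.trans ?_ hpos
  exact (IntervalIntegrable.iff_comp_neg (f := dunklWeight μ κ) (a := -1) (b := 0)).2
    (by simpa using hneg.symm)

lemma integral_pow_mul_dunklWeight (hμ : -(1/2) < μ) (hκ : 0 < κ) (n : ℕ) :
    ∫ t in (-1)..1, t ^ n * dunklWeight μ κ t = realBeta (μ + 1/2 + (n / 2 + n % 2 : ℕ)) κ := by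
  have hint : IntervalIntegrable (fun t => t ^ n * dunklWeight μ κ t) volume (-1) 1 :=
    (intervalIntegrable_dunklWeight hμ hκ).continuousOn_mul (continuousOn_pow n)
  rw [intervalIntegral_neg_self_eq_integral_add_comp_neg hint,
    intervalIntegral.integral_of_le zero_le_one, integral_Ioc_eq_integral_Ioo,
    setIntegral_congr_fun measurableSet_Ioo fun s hs => pow_mul_dunklWeight_add_neg hκ.ne' n hs]
  exact (integral_Ioo_zero_one_comp_sq fun u => u ^ (μ + 1/2 + (n / 2 + n % 2 : ℕ) - 1) *
    (1 - u) ^ (κ - 1)).trans (integral_rpow_mul_one_sub_rpow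
      (by have := Nat.cast_nonneg (α := ℝ) (n / 2 + n % 2); linarith) hκ)

end Weight

lemma summable_norm_mul_pow_of_summable {𝕜 : Type*} [NormedField 𝕜] {a : ℕ → 𝕜} {z : 𝕜}
    (hz : Summable fun n => a n * z ^ n) {r : ℝ} (hr₀ : 0 ≤ r) (hr : r < ‖z‖) :
    Summable fun n => ‖a n‖ * r ^ n := by
  obtain ⟨C, hC⟩ := hz.tendsto_atTop_zero.norm.bddAbove_range
  have hz₀ : 0 < ‖z‖ := hr₀.trans_lt hr
  refine Summable.of_nonneg_of_le (fun n => by positivity) (fun n => ?_)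
    ((summable_geometric_of_lt_one (by positivity) ((div_lt_one hz₀).2 hr)).mul_left C)
  calc ‖a n‖ * r ^ n = ‖a n * z ^ n‖ * (r / ‖z‖) ^ n := by
        rw [norm_mul, norm_pow, div_pow, mul_assoc, mul_div_cancel₀ _ (by positivity)]
    _ ≤ C * (r / ‖z‖) ^ n := by gcongr; exact hC ⟨n, rfl⟩

lemma hasSum_intervalIntegral_tsum_pow_mul {a : ℕ → ℂ} {x : ℝ} {w : ℝ → ℝ}
    (ha : Summable fun n => ‖a n‖ * |x| ^ n) (hw : IntervalIntegrable w volume (-1) 1) :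
    HasSum (fun n => ∫ t in (-1)..1, a n * ((x * t : ℝ) : ℂ) ^ n * (w t : ℂ))
      (∫ t in (-1)..1, (∑' n, a n * ((x * t : ℝ) : ℂ) ^ n) * (w t : ℂ)) := by
  have hbound : ∀ n, ∀ t ∈ Ι (-1 : ℝ) 1,
      ‖a n * ((x * t : ℝ) : ℂ) ^ n‖ ≤ ‖a n‖ * |x| ^ n := by
    intro n t ht
    rw [uIoc_of_le (by norm_num)] at ht
    have ht' : |t| ≤ 1 := abs_le.2 ⟨ht.1.le, ht.2⟩
    rw [norm_mul, norm_pow, Complex.norm_real, Real.norm_eq_abs, abs_mul, mul_pow]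
    gcongr
    exact mul_le_of_le_one_right (by positivity) (pow_le_one₀ (abs_nonneg t) ht')
  refine intervalIntegral.hasSum_integral_of_dominated_convergence
    (fun n t => ‖a n‖ * |x| ^ n * ‖w t‖) (fun n => ?_) (fun n => ?_) ?_ ?_ ?_
  · have hmono : Continuous fun t : ℝ => a n * ((x * t : ℝ) : ℂ) ^ n := by fun_prop
    exact hmono.aestronglyMeasurable.mul
      (Complex.continuous_ofReal.comp_aestronglyMeasurable hw.aestronglyMeasurable_restrict_uIoc)
  · refine Eventually.of_forall fun t ht => ?_
    rw [norm_mul, Complex.norm_real]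
    gcongr
    exact hbound n t ht
  · exact Eventually.of_forall fun t _ => ha.mul_right _
  · simp_rw [tsum_mul_right]
    exact hw.norm.const_mul _
  · refine Eventually.of_forall fun t ht => ?_
    exact ((ha.of_norm_bounded fun n => hbound n t ht).hasSum).mul_right _

lemma intervalIntegral_mul_pow_mul_dunklWeight {μ₁ μ₂ : ℝ} (h₁ : -(1/2) < μ₁) (h₁₂ : μ₁ < μ₂)
    (c : ℂ) (x : ℝ) (n : ℕ) :
    ∫ t in (-1)..1, c * ((x * t : ℝ) : ℂ) ^ n * (dunklWeight μ₁ (μ₂ - μ₁) t : ℂ) =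
      realBeta (μ₁ + 1/2) (μ₂ - μ₁) *
        (c * ((dunklGamma μ₁ n / dunklGamma μ₂ n : ℝ) : ℂ) * x ^ n) := by
  have hB := (realBeta_pos (by linarith : 0 < μ₁ + 1/2) (sub_pos.2 h₁₂)).ne'
  have hmonomial : ∫ t in (-1)..1, c * ((x * t : ℝ) : ℂ) ^ n * (dunklWeight μ₁ (μ₂ - μ₁) t : ℂ) =
      c * x ^ n * ((∫ t in (-1)..1, t ^ n * dunklWeight μ₁ (μ₂ - μ₁) t : ℝ) : ℂ) := by
    rw [← intervalIntegral.integral_ofReal, ← intervalIntegral.integral_const_mul]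
    congr 1 with t
    push_cast
    ring
  rw [hmonomial, integral_pow_mul_dunklWeight h₁ (sub_pos.2 h₁₂),
    dunklGamma_div_dunklGamma h₁ h₁₂ n, Complex.ofReal_div]
  generalize realBeta (μ₁ + 1/2) (μ₂ - μ₁) = B at hB ⊢
  have hB' : (B : ℂ) ≠ 0 := Complex.ofReal_ne_zero.2 hB
  field_simp

/-- integral representation of the Dunkl transfer operator
`θ(xⁿ) = (γ_{μ₁}(n)/γ_{μ₂}(n)) xⁿ` applied to an analytic function on the
unit disc. -/
theorem dunkl_transfer_integral_rep
    (μ1 μ2 : ℝ) (h1 : -(1/2) < μ1) (h2 : μ1 < μ2)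
    (a : ℕ → ℂ) (hconv : ∀ z : ℂ, ‖z‖ < 1 → Summable (fun n => a n * z ^ n))
    (x : ℝ) (hx : |x| < 1) :
    HasSum (fun n => a n * ((dunklGamma μ1 n / dunklGamma μ2 n : ℝ) : ℂ) * (x : ℂ) ^ n)
      (((realBeta (μ1 + 1/2) (μ2 - μ1) : ℝ) : ℂ)⁻¹ *
        ∫ t in (-1:ℝ)..1,
          (∑' n, a n * ((x * t : ℝ) : ℂ) ^ n) *
            ((|t| ^ (2 * μ1) * (1 - t) ^ (μ2 - μ1 - 1) * (1 + t) ^ (μ2 - μ1) : ℝ) : ℂ)) := by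
  have hB : ((realBeta (μ1 + 1/2) (μ2 - μ1) : ℝ) : ℂ) ≠ 0 :=
    Complex.ofReal_ne_zero.2 (realBeta_pos (by linarith) (sub_pos.2 h2)).ne'
  have hr : ‖(((1 + |x|) / 2 : ℝ) : ℂ)‖ = (1 + |x|) / 2 := by
    rw [Complex.norm_real, Real.norm_of_nonneg (by positivity)]
  have ha : Summable fun n => ‖a n‖ * |x| ^ n :=
    summable_norm_mul_pow_of_summable (hconv _ (by linarith)) (abs_nonneg x) (by linarith)
  have hsum := hasSum_intervalIntegral_tsum_pow_mul ha
    (intervalIntegrable_dunklWeight h1 (sub_pos.2 h2))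
  simp_rw [intervalIntegral_mul_pow_mul_dunklWeight h1 h2] at hsum
  rwa [← hasSum_mul_left_iff hB, mul_inv_cancel_left₀ hB]
end

section
/- Let (a_k^{(i)}), (b_k^{(i)}), i = 1,2,3, be complex sequences with a_0^{(i)} \ne 0 and b_k^{(i)} \ne 0 for all k, let P_n, R_n, S_n be the Brenke polynomials associated with (a^{(1)},b^{(1)}), (a^{(2)},b^{(2)}), (a^{(3)},b^{(3)}) respectively, and let (\hat{a}_k^{(1)}) be the coefficients of the reciprocal power series of A_1(t) = \sum a_k^{(1)} t^k, with the convention \hat{a}_j^{(1)} = 0 for j < 0. Then for all i, j and all x, R_i(x) S_j(x) = \sum_{k=0}^{i+j} L_{ij}(k) P_k(x), where L_{ij}(k) = (i!j!/k!) \sum_{n=0}^{i} \sum_{m=0}^{j} (b_n^{(2)} b_m^{(3)} / b_{n+m}^{(1)}) a_{i-n}^{(2)} a_{j-m}^{(3)} \hat{a}_{n+m-k}^{(1)}. -/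
/-!
`P_k(x)/k! = ∑_p b_p a_{k-p} x^p` is the coefficient of `t^k` in `A(t) B(xt)`, where
`B(t) = ∑ b_p t^p`. Multiplying by `1/A(t) = ∑ â_k t^k` inverts this triangular relation:
`b_s x^s = ∑_{k ≤ s} â_{s-k} P_k(x)/k!`. Expanding `R_i(x) S_j(x)` into the monomials
`x^{n+m}` and substituting this expansion for each of them gives the coefficients `L_{ij}(k)`.
-/

open Finset

/-- The Brenke polynomial `P_n(x) = n! ∑_{m=0}^{n} b_m a_{n-m} x^m` associated
with coefficient sequences `a`, `b`. -/
noncomputable def brenke (a b : ℕ → ℂ) (n : ℕ) (x : ℂ) : ℂ :=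
  (Nat.factorial n : ℂ) * ∑ m ∈ Finset.range (n + 1), b m * a (n - m) * x ^ m

open PowerSeries in
theorem mk_mul_mk_eq_one_of_reciprocal {K : Type*} [Field K] {a ahat : ℕ → K}
    (ha : a 0 ≠ 0) (hhat0 : ahat 0 = 1 / a 0)
    (hhat : ∀ n : ℕ, 1 ≤ n → ∑ k ∈ range (n + 1), a k * ahat (n - k) = 0) :
    mk a * mk ahat = 1 := by
  ext n
  rw [coeff_mul, Nat.sum_antidiagonal_eq_sum_range_succ_mk]
  simp only [coeff_mk, coeff_one]
  rcases n with _ | n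
  · simp [hhat0, ha]
  · simpa using hhat (n + 1) n.succ_pos

open PowerSeries in
theorem sum_range_mul_convolution_of_mk_mul_mk_eq_one {R : Type*} [CommRing R]
    {a ahat : ℕ → R} (h : mk a * mk ahat = 1) (c : ℕ → R) (s : ℕ) :
    ∑ k ∈ range (s + 1), ahat (s - k) * ∑ p ∈ range (k + 1), c p * a (k - p) = c s := by
  have hcoeff := congrArg (coeff s)
    (show mk c * mk a * mk ahat = mk c by rw [mul_assoc, h, mul_one])
  simp only [coeff_mul, Nat.sum_antidiagonal_eq_sum_range_succ_mk, coeff_mk] at hcoeff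
  simpa only [mul_comm (ahat _)] using hcoeff

theorem brenke_div_factorial (a b : ℕ → ℂ) (k : ℕ) (x : ℂ) :
    brenke a b k x / k.factorial = ∑ p ∈ range (k + 1), b p * a (k - p) * x ^ p := by
  rw [brenke, mul_div_cancel_left₀ _ (Nat.cast_ne_zero.mpr k.factorial_ne_zero)]

theorem sum_ite_mul_brenke_div_factorial {a b ahat : ℕ → ℂ}
    (h : PowerSeries.mk a * PowerSeries.mk ahat = 1) (x : ℂ) {s N : ℕ} (hsN : s ≤ N) :
    ∑ k ∈ range (N + 1), (if k ≤ s then ahat (s - k) else 0) * (brenke a b k x / k.factorial) =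
      b s * x ^ s := by
  have hfilter : {k ∈ range (N + 1) | k ≤ s} = range (s + 1) := by
    ext k; simp only [mem_filter, mem_range]; omega
  simp only [ite_mul, zero_mul]
  rw [← sum_filter, hfilter]
  simp only [brenke_div_factorial]
  convert sum_range_mul_convolution_of_mk_mul_mk_eq_one h (fun p => b p * x ^ p) s using 4
  ring

theorem brenke_mul_brenke (a b a' b' : ℕ → ℂ) (i j : ℕ) (x : ℂ) :
    brenke a b i x * brenke a' b' j x =
      ∑ n ∈ range (i + 1), ∑ m ∈ range (j + 1),
        i.factorial * j.factorial * (b n * b' m * a (i - n) * a' (j - m) * x ^ (n + m)) := by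
  rw [brenke, brenke, mul_mul_mul_comm, sum_mul_sum, mul_sum]
  refine sum_congr rfl fun n _ => ?_
  rw [mul_sum]
  refine sum_congr rfl fun m _ => ?_
  ring

theorem brenke_linearization_explicit_general
    (a1 b1 a2 b2 a3 b3 : ℕ → ℂ)
    (ha1 : a1 0 ≠ 0)
    (hb1 : ∀ k, b1 k ≠ 0)
    (ahat : ℕ → ℂ) (hhat0 : ahat 0 = 1 / a1 0)
    (hhat : ∀ n : ℕ, 1 ≤ n → ∑ k ∈ Finset.range (n + 1), a1 k * ahat (n - k) = 0)
    (i j : ℕ) (x : ℂ) :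
    brenke a2 b2 i x * brenke a3 b3 j x =
      ∑ k ∈ Finset.range (i + j + 1),
        ((Nat.factorial i : ℂ) * (Nat.factorial j : ℂ) / (Nat.factorial k : ℂ) *
            ∑ n ∈ Finset.range (i + 1), ∑ m ∈ Finset.range (j + 1),
              (b2 n * b3 m / b1 (n + m)) * a2 (i - n) * a3 (j - m) *
                (if k ≤ n + m then ahat (n + m - k) else 0)) *
          brenke a1 b1 k x := by
  have hrecip := mk_mul_mk_eq_one_of_reciprocal ha1 hhat0 hhat
  calc brenke a2 b2 i x * brenke a3 b3 j x
      = ∑ n ∈ range (i + 1), ∑ m ∈ range (j + 1),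
          i.factorial * j.factorial * (b2 n * b3 m / b1 (n + m) * a2 (i - n) * a3 (j - m)) *
            (b1 (n + m) * x ^ (n + m)) := by
        rw [brenke_mul_brenke]
        refine sum_congr rfl fun n _ => sum_congr rfl fun m _ => ?_
        field_simp [hb1 (n + m)]
    _ = ∑ n ∈ range (i + 1), ∑ m ∈ range (j + 1), ∑ k ∈ range (i + j + 1),
          i.factorial * j.factorial * (b2 n * b3 m / b1 (n + m) * a2 (i - n) * a3 (j - m)) *
            ((if k ≤ n + m then ahat (n + m - k) else 0) * (brenke a1 b1 k x / k.factorial)) := by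
        refine sum_congr rfl fun n hn => sum_congr rfl fun m hm => ?_
        rw [← mul_sum, sum_ite_mul_brenke_div_factorial hrecip x]
        simp only [mem_range] at hn hm
        omega
    _ = _ := by
        simp only [mul_sum, sum_mul]
        rw [sum_congr rfl fun n _ => sum_comm, sum_comm]
        refine sum_congr rfl fun k _ => sum_congr rfl fun n _ => sum_congr rfl fun m _ => ?_
        ring

/-- explicit linearization coefficients for three Brenke
polynomial sets:
`R_i(x) S_j(x) = ∑_{k=0}^{i+j} L_{ij}(k) P_k(x)` with
`L_{ij}(k) = (i!j!/k!) ∑_{n=0}^{i} ∑_{m=0}^{j} (b₂ₙ b₃ₘ / b₁_{n+m})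
  a₂_{i-n} a₃_{j-m} â₁_{n+m-k}`,
with the convention `â₁_j = 0` for `j < 0`. -/
theorem brenke_linearization_explicit
    (a1 b1 a2 b2 a3 b3 : ℕ → ℂ)
    (ha1 : a1 0 ≠ 0) (ha2 : a2 0 ≠ 0) (ha3 : a3 0 ≠ 0)
    (hb1 : ∀ k, b1 k ≠ 0) (hb2 : ∀ k, b2 k ≠ 0) (hb3 : ∀ k, b3 k ≠ 0)
    (ahat : ℕ → ℂ) (hhat0 : ahat 0 = 1 / a1 0)
    (hhat : ∀ n : ℕ, 1 ≤ n → ∑ k ∈ Finset.range (n + 1), a1 k * ahat (n - k) = 0)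
    (i j : ℕ) (x : ℂ) :
    brenke a2 b2 i x * brenke a3 b3 j x =
      ∑ k ∈ Finset.range (i + j + 1),
        ((Nat.factorial i : ℂ) * (Nat.factorial j : ℂ) / (Nat.factorial k : ℂ) *
            ∑ n ∈ Finset.range (i + 1), ∑ m ∈ Finset.range (j + 1),
              (b2 n * b3 m / b1 (n + m)) * a2 (i - n) * a3 (j - m) *
                (if k ≤ n + m then ahat (n + m - k) else 0)) *
          brenke a1 b1 k x :=
  brenke_linearization_explicit_general a1 b1 a2 b2 a3 b3 ha1 hb1 ahat hhat0 hhat i j x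
end

section
/- Let \mu_2 > \mu_1 > -1/2 and define the normalized generalized Hermite polynomials \hat{H}_n^{\mu}(x) = (\gamma_\mu(n)/(n! \lfloor n/2 \rfloor!)) H_n^{\mu}(x), where H_n^{\mu}(x) = n! \sum_{k=0}^{\lfloor n/2 \rfloor} (-1)^k (2x)^{n-2k} / (k! \gamma_\mu(n-2k)). Then for all n \in \mathbb{N} and all x, \hat{H}_n^{\mu_2}(x) = \sum_{k=0}^{\lfloor n/2 \rfloor} ((-1)^k 4^k / k!) (\mu_2 - \mu_1)_k \, \hat{H}_{n-2k}^{\mu_1}(x). -/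
open Finset

/-- The generalized Hermite (Szegő–Chihara) polynomial
`H_n^μ(x) = n! ∑_{k=0}^{⌊n/2⌋} (-1)^k (2x)^{n-2k} / (k! γ_μ(n-2k))`. -/
noncomputable def genHermite (μ : ℝ) (n : ℕ) (x : ℝ) : ℝ :=
  (Nat.factorial n : ℝ) *
    ∑ k ∈ Finset.range (n / 2 + 1),
      (-1 : ℝ) ^ k * (2 * x) ^ (n - 2 * k) /
        ((Nat.factorial k : ℝ) * dunklGamma μ (n - 2 * k))

/-- The normalized generalized Hermite polynomial
`Ĥ_n^μ(x) = (γ_μ(n)/(n! ⌊n/2⌋!)) H_n^μ(x)`. -/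
noncomputable def genHermiteNorm (μ : ℝ) (n : ℕ) (x : ℝ) : ℝ :=
  dunklGamma μ n / ((Nat.factorial n : ℝ) * (Nat.factorial (n / 2) : ℝ)) *
    genHermite μ n x

/-!
The ratio `γ_μ(n) / γ_μ(n - 2k)` telescopes, so the coefficient of `(2x)^(n-2k)` in `Ĥ_n^μ(x)` is
`(-4)^k / (⌊n/2⌋ - k)!` times the rising-factorial quotient `(c)_k / k!` (`Ring.multichoose c k`)
with `c = μ + 1/2 + ⌈n/2⌉ - k`. After regrouping the double sum on the right by total degree,
the connection formula becomes, coefficientwise, the Chu–Vandermonde identity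
`(a + b)_m / m! = ∑ (a)_k / k! · (b)_{m-k} / (m-k)!` with `a = μ₂ - μ₁`, `b = μ₁ + 1/2 + ⌈n/2⌉ - m`.
-/

open scoped Nat

theorem ascPochhammer_eval_eq_prod_range {R : Type*} [CommSemiring R] (n : ℕ) (r : R) :
    (ascPochhammer R n).eval r = ∏ i ∈ range n, (r + i) := by
  induction n with
  | zero => simp
  | succ n ih => simp [ascPochhammer_succ_right, ih, prod_range_succ]

/-- Chu–Vandermonde for rising factorials, deduced from `Ring.add_choose_eq` at `-r, -s`
through `choose (-r) n = (-1)ⁿ • multichoose r n`. -/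
theorem Ring.multichoose_add {R : Type*} [CommRing R] [BinomialRing R] (r s : R) (k : ℕ) :
    multichoose (r + s) k = ∑ ij ∈ antidiagonal k, multichoose r ij.1 * multichoose s ij.2 := by
  have h := add_choose_eq (r := -r) (s := -s) k (Commute.all _ _)
  rw [← neg_add, choose_neg'] at h
  rw [← one_smul ℤˣ (multichoose (r + s) k), ← Int.units_mul_self (k : ℤ).negOnePow, mul_smul,
    h, smul_sum]
  refine sum_congr rfl fun ij hij => ?_
  rw [choose_neg', choose_neg', smul_mul_smul_comm, ← Int.negOnePow_add, ← Nat.cast_add,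
    mem_antidiagonal.mp hij, smul_smul, Int.units_mul_self, one_smul]

theorem Real.multichoose_eq_prod_range_div (a : ℝ) (k : ℕ) :
    Ring.multichoose a k = (∏ i ∈ range k, (a + i)) / k ! := by
  rw [eq_div_iff (by positivity), mul_comm, ← nsmul_eq_mul,
    Ring.factorial_nsmul_multichoose_eq_ascPochhammer, Polynomial.ascPochhammer_smeval_eq_eval,
    ascPochhammer_eval_eq_prod_range]

theorem dunklGamma_pos {μ : ℝ} (hμ : -(1 / 2) < μ) (n : ℕ) : 0 < dunklGamma μ n := by
  have hfactor_pos : ∀ i ∈ range (n / 2 + n % 2), 0 < μ + 1 / 2 + (i : ℝ) := fun i _ => by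
    linarith [(i.cast_nonneg : (0 : ℝ) ≤ i)]
  have := prod_pos hfactor_pos
  unfold dunklGamma
  positivity

theorem dunklGamma_mul_factorial_eq (μ : ℝ) {n k : ℕ} (hk : k ≤ n / 2) :
    dunklGamma μ n * (n / 2 - k)! =
      4 ^ k * (n / 2)! * (∏ i ∈ range k, (μ + 1 / 2 + ↑(n / 2 - k + n % 2) + i)) *
        dunklGamma μ (n - 2 * k) := by
  have hdiv : (n - 2 * k) / 2 = n / 2 - k := by omega
  have hmod : (n - 2 * k) % 2 = n % 2 := by omega
  have hsplit : n / 2 + n % 2 = (n / 2 - k + n % 2) + k := by omega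
  have hpow : (2 : ℝ) ^ n = 4 ^ k * 2 ^ (n - 2 * k) := by
    rw [show (4 : ℝ) = 2 ^ 2 by norm_num, ← pow_mul, ← pow_add]; congr 1; omega
  simp only [dunklGamma, hdiv, hmod, hsplit, prod_range_add, hpow, Nat.cast_add, add_assoc]
  ring

theorem genHermiteNorm_eq_sum {μ : ℝ} (hμ : -(1 / 2) < μ) (n : ℕ) (x : ℝ) :
    genHermiteNorm μ n x =
      ∑ k ∈ range (n / 2 + 1), (-4) ^ k / (n / 2 - k)! *
        Ring.multichoose (μ + 1 / 2 + ↑(n / 2 - k + n % 2)) k * (2 * x) ^ (n - 2 * k) := by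
  rw [genHermiteNorm, genHermite, ← mul_assoc, mul_sum]
  refine sum_congr rfl fun k hk => ?_
  have hγ := dunklGamma_mul_factorial_eq μ (Nat.lt_succ_iff.mp (mem_range.mp hk))
  have := (dunklGamma_pos hμ (n - 2 * k)).ne'
  rw [Real.multichoose_eq_prod_range_div, neg_pow (4 : ℝ)]
  generalize ∏ i ∈ range k, (μ + 1 / 2 + ↑(n / 2 - k + n % 2) + (i : ℝ)) = P at hγ ⊢
  field_simp
  linear_combination (x ^ (n - 2 * k) * 2 ^ (n - 2 * k)) * hγ

theorem genHermiteNorm_sub_two_mul_eq_sum {μ : ℝ} (hμ : -(1 / 2) < μ) {n k : ℕ}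
    (hk : k ≤ n / 2) (x : ℝ) :
    genHermiteNorm μ (n - 2 * k) x =
      ∑ j ∈ range (n / 2 + 1 - k), (-4) ^ j / (n / 2 - k - j)! *
        Ring.multichoose (μ + 1 / 2 + ↑(n / 2 - k - j + n % 2)) j *
          (2 * x) ^ (n - 2 * k - 2 * j) := by
  rw [genHermiteNorm_eq_sum hμ, show (n - 2 * k) / 2 = n / 2 - k by omega,
    show (n - 2 * k) % 2 = n % 2 by omega, show n / 2 - k + 1 = n / 2 + 1 - k by omega]

/-- connection formula between normalized generalized Hermite
polynomial sets:
`Ĥ_n^{μ₂}(x) = ∑_{k=0}^{⌊n/2⌋} ((-1)^k 4^k / k!) (μ₂-μ₁)_k Ĥ_{n-2k}^{μ₁}(x)`. -/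
theorem genHermiteNorm_connection
    (μ1 μ2 : ℝ) (h1 : -(1/2) < μ1) (h2 : μ1 < μ2)
    (n : ℕ) (x : ℝ) :
    genHermiteNorm μ2 n x =
      ∑ k ∈ Finset.range (n / 2 + 1),
        (-1 : ℝ) ^ k * 4 ^ k / (Nat.factorial k : ℝ) *
          (∏ i ∈ Finset.range k, (μ2 - μ1 + i)) *
          genHermiteNorm μ1 (n - 2 * k) x := by
  have hcoef (k : ℕ) : (-1 : ℝ) ^ k * 4 ^ k / k ! * ∏ i ∈ range k, (μ2 - μ1 + i) =
      (-4) ^ k * Ring.multichoose (μ2 - μ1) k := by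
    rw [Real.multichoose_eq_prod_range_div, neg_pow (4 : ℝ)]
    ring
  rw [sum_congr rfl fun k hk => congrArg₂ (· * ·) (hcoef k)
    (genHermiteNorm_sub_two_mul_eq_sum h1 (Nat.lt_succ_iff.mp (mem_range.mp hk)) x)]
  simp_rw [mul_sum]
  rw [← sum_range_diag_flip, genHermiteNorm_eq_sum (h1.trans h2)]
  refine sum_congr rfl fun m hm => ?_
  have hm : m ≤ n / 2 := Nat.lt_succ_iff.mp (mem_range.mp hm)
  rw [show μ2 + 1 / 2 + ↑(n / 2 - m + n % 2) =
      μ2 - μ1 + (μ1 + 1 / 2 + ↑(n / 2 - m + n % 2)) by ring,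
    Ring.multichoose_add, Nat.sum_antidiagonal_eq_sum_range_succ
      (fun i j => Ring.multichoose (μ2 - μ1) i * Ring.multichoose _ j), mul_sum, sum_mul]
  refine sum_congr rfl fun k hk => ?_
  have hk : k ≤ m := Nat.lt_succ_iff.mp (mem_range.mp hk)
  rw [show n / 2 - k - (m - k) = n / 2 - m by omega,
    show n - 2 * k - 2 * (m - k) = n - 2 * m by omega, ← pow_mul_pow_sub (-4 : ℝ) hk]
  ring
end
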